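/- arXiv:2501.10523 — 2 statements merged into one kernel-verified Lean document; each statement's English description precedes it below -/
import Mathlib

section
/- Let a, λ, μ, C be positive real numbers with μ² − 4aλ > 0 and λ < C(μ − aC), and set x_e = (μ − √(μ² − 4aλ))/(2a). Then there exists ε > 0 such that every function f : ℝ → ℝ satisfying f(0) ≥ 0, |f(0) − x_e| < ε, and f′(t) = λ − (μ − a·f(t))·min(f(t), C) for all t ≥ 0, converges to x_e as t → ∞ (i.e. f(t) → x_e). In other words, x_e is a locally asymptotically stable equilibrium of the single-class fluid dynamics ẋ = λ − (μ − a x)·min(x, C). -/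
/-!
Below `C` the drift factors as `a (x - x_e) (x - x_+)` with `x_+ - x_e = √D / a`, `D = μ² - 4aλ`, so within
`ε ≤ (x_+ - x_e) / 2` of `x_e` (and below `C`) it satisfies the sector bound
`(x - x_e) ẋ ≤ -(√D / 2) (x - x_e)²`. For `V = (f - x_e)²` this gives `V' ≤ -√D V` as long as
`V ≤ ε²`, and the fencing theorem for derivatives keeps `V` below `ε² e^{-√D t / 2}` for all time.
-/

open Filter Topology Set Real

section ScalarStability

variable {f g : ℝ → ℝ} {x₀ ε k : ℝ}

theorem sq_sub_le_mul_exp_of_hasDerivAt (hk : 0 < k)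
    (hg : ∀ x, |x - x₀| ≤ ε → (x - x₀) * g x ≤ -k * (x - x₀) ^ 2)
    (hf : ∀ t, 0 ≤ t → HasDerivAt f (g (f t)) t) (h0 : |f 0 - x₀| < ε) {t : ℝ} (ht : 0 ≤ t) :
    (f t - x₀) ^ 2 ≤ ε ^ 2 * exp (-k * t) := by
  have hε : 0 < ε := (abs_nonneg _).trans_lt h0
  have hV : ∀ s, 0 ≤ s →
      HasDerivAt (fun s => (f s - x₀) ^ 2) (2 * ((f s - x₀) * g (f s))) s := fun s hs =>
    (((hf s hs).sub_const x₀).pow 2).congr_deriv (by ring)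
  have hB : ∀ s, HasDerivAt (fun s => ε ^ 2 * exp (-k * s)) (-k * (ε ^ 2 * exp (-k * s))) s :=
    fun s => ((((hasDerivAt_id s).const_mul (-k)).exp).const_mul (ε ^ 2)).congr_deriv (by simp only [id, mul_one]; ring)
  refine image_le_of_deriv_right_lt_deriv_boundary
    (fun s hs => (hV s hs.1).continuousAt.continuousWithinAt)
    (fun s hs => (hV s hs.1).hasDerivWithinAt) ?_ hB ?_ ⟨ht, le_rfl⟩
  · simpa using (sq_lt_sq' (abs_lt.1 h0).1 (abs_lt.1 h0).2).le
  · intro s hs hVB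
    have hBpos : 0 < ε ^ 2 * exp (-k * s) := by positivity
    have hnear : |f s - x₀| ≤ ε := by
      refine abs_le.2 (abs_le_of_sq_le_sq' ?_ hε.le)
      calc (f s - x₀) ^ 2 = ε ^ 2 * exp (-k * s) := hVB
        _ ≤ ε ^ 2 * 1 := by gcongr; exact exp_le_one_iff.2 (by nlinarith [hs.1])
        _ = ε ^ 2 := mul_one _
    calc 2 * ((f s - x₀) * g (f s)) ≤ 2 * (-k * (f s - x₀) ^ 2) := mul_le_mul_of_nonneg_left (hg _ hnear) two_pos.le
      _ = 2 * (-k * (ε ^ 2 * exp (-k * s))) := by rw [hVB]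
      _ < -k * (ε ^ 2 * exp (-k * s)) := by nlinarith

theorem tendsto_of_hasDerivAt_of_mul_sub_le (hk : 0 < k)
    (hg : ∀ x, |x - x₀| ≤ ε → (x - x₀) * g x ≤ -k * (x - x₀) ^ 2)
    (hf : ∀ t, 0 ≤ t → HasDerivAt f (g (f t)) t) (h0 : |f 0 - x₀| < ε) :
    Tendsto f atTop (𝓝 x₀) := by
  have hbound : Tendsto (fun t => ε ^ 2 * exp (-k * t)) atTop (𝓝 0) := by
    simpa using (tendsto_exp_neg_atTop_nhds_zero.comp (tendsto_id.const_mul_atTop hk)).const_mul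
      (ε ^ 2)
  have hsq : Tendsto (fun t => (f t - x₀) ^ 2) atTop (𝓝 0) :=
    tendsto_of_tendsto_of_tendsto_of_le_of_le' tendsto_const_nhds hbound
      (Eventually.of_forall fun t => sq_nonneg _)
      ((eventually_ge_atTop 0).mono fun t ht => sq_sub_le_mul_exp_of_hasDerivAt hk hg hf h0 ht)
  rw [tendsto_iff_dist_tendsto_zero]
  simpa [Function.comp_def, sqrt_sq_eq_abs, dist_eq] using (continuous_sqrt.tendsto 0).comp hsq

end ScalarStability

section QuadraticDrift

variable {a lam mu C s : ℝ}

theorem sub_mul_self_eq_mul_sub_mul_sub (ha : a ≠ 0) (hs : s ^ 2 = mu ^ 2 - 4 * a * lam) (x : ℝ) :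
    lam - (mu - a * x) * x = a * (x - (mu - s) / (2 * a)) * (x - (mu + s) / (2 * a)) := by
  field_simp
  linear_combination hs

theorem quadratic_lower_root_lt (ha : 0 < a) (hs0 : 0 < s) (hs : s ^ 2 = mu ^ 2 - 4 * a * lam)
    (hload : lam < C * (mu - a * C)) : (mu - s) / (2 * a) < C := by
  have hneg : a * (C - (mu - s) / (2 * a)) * (C - (mu + s) / (2 * a)) < 0 := by
    rw [← sub_mul_self_eq_mul_sub_mul_sub ha.ne' hs]; linarith
  have hroots : (mu - s) / (2 * a) < (mu + s) / (2 * a) := by gcongr; linarith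
  by_contra! h
  nlinarith [mul_nonneg ha.le (mul_nonneg (sub_nonneg.2 h) (sub_nonneg.2 (h.trans hroots.le)))]

theorem mul_drift_le_neg_mul_sq {ε x : ℝ} (ha : 0 < a) (hs : s ^ 2 = mu ^ 2 - 4 * a * lam)
    (hεC : (mu - s) / (2 * a) + ε ≤ C) (hεs : 2 * ε ≤ s / a) (hx : |x - (mu - s) / (2 * a)| ≤ ε) :
    (x - (mu - s) / (2 * a)) * (lam - (mu - a * x) * min x C)
      ≤ -(s / 2) * (x - (mu - s) / (2 * a)) ^ 2 := by
  have hxC : x ≤ C := by linarith [(abs_le.1 hx).2]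
  have hgap : x - (mu + s) / (2 * a) ≤ -(s / a) / 2 := by
    have : (mu + s) / (2 * a) = (mu - s) / (2 * a) + s / a := by field_simp; ring
    linarith [(abs_le.1 hx).2]
  rw [min_eq_left hxC, sub_mul_self_eq_mul_sub_mul_sub ha.ne' hs]
  calc (x - (mu - s) / (2 * a)) * (a * (x - (mu - s) / (2 * a)) * (x - (mu + s) / (2 * a)))
      = a * (x - (mu - s) / (2 * a)) ^ 2 * (x - (mu + s) / (2 * a)) := by ring
    _ ≤ a * (x - (mu - s) / (2 * a)) ^ 2 * (-(s / a) / 2) := by gcongr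
    _ = -(s / 2) * (x - (mu - s) / (2 * a)) ^ 2 := by field_simp

end QuadraticDrift

theorem good_equilibrium_stable_general (a lam mu C : ℝ)
    (ha : 0 < a)
    (hD : 0 < mu ^ 2 - 4 * a * lam) (hload : lam < C * (mu - a * C)) :
    ∃ ε > 0, ∀ f : ℝ → ℝ,
      0 ≤ f 0 →
      |f 0 - (mu - Real.sqrt (mu ^ 2 - 4 * a * lam)) / (2 * a)| < ε →
      (∀ t : ℝ, 0 ≤ t → HasDerivAt f (lam - (mu - a * f t) * min (f t) C) t) →
      Filter.Tendsto f Filter.atTop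
        (nhds ((mu - Real.sqrt (mu ^ 2 - 4 * a * lam)) / (2 * a))) := by
  set s := √(mu ^ 2 - 4 * a * lam)
  have hs0 : 0 < s := sqrt_pos.2 hD
  have hs : s ^ 2 = mu ^ 2 - 4 * a * lam := sq_sqrt hD.le
  have hxeC := quadratic_lower_root_lt ha hs0 hs hload
  refine ⟨min (C - (mu - s) / (2 * a)) (s / a) / 2, by positivity, fun f _ h0 hf => ?_⟩
  refine tendsto_of_hasDerivAt_of_mul_sub_le (g := fun x => lam - (mu - a * x) * min x C)
    (half_pos hs0) (fun x hx => mul_drift_le_neg_mul_sq ha hs ?_ ?_ hx) hf h0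
  · linarith [min_le_left (C - (mu - s) / (2 * a)) (s / a)]
  · linarith [min_le_right (C - (mu - s) / (2 * a)) (s / a)]

/-- Local asymptotic stability of the good equilibrium
`x_e = (mu - √(mu^2 - 4*a*lam))/(2*a)` of the single-class fluid dynamics
`ẋ = lam - (mu - a*x)*min(x, C)`: there exists `ε > 0` such that every
solution starting nonnegatively within distance `ε` of `x_e` converges
to `x_e` as `t → ∞`. -/
theorem good_equilibrium_stable (a lam mu C : ℝ)
    (ha : 0 < a) (hlam : 0 < lam) (hmu : 0 < mu) (hC : 0 < C)
    (hD : 0 < mu ^ 2 - 4 * a * lam) (hload : lam < C * (mu - a * C)) :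
    ∃ ε > 0, ∀ f : ℝ → ℝ,
      0 ≤ f 0 →
      |f 0 - (mu - Real.sqrt (mu ^ 2 - 4 * a * lam)) / (2 * a)| < ε →
      (∀ t : ℝ, 0 ≤ t → HasDerivAt f (lam - (mu - a * f t) * min (f t) C) t) →
      Filter.Tendsto f Filter.atTop
        (nhds ((mu - Real.sqrt (mu ^ 2 - 4 * a * lam)) / (2 * a))) :=
  good_equilibrium_stable_general a lam mu C ha hD hload
end

section
/- Let a, λ, μ, C be positive real numbers with μ² − 4aλ > 0, set x₁ = (μ − √(μ² − 4aλ))/(2a), and suppose x₁ < C. If f : ℝ → ℝ is differentiable with f′(t) = λ − (μ − a·f(t))·min(f(t), C) for all t ≥ 0 and 0 ≤ f(0) ≤ x₁, then f is monotone nondecreasing on [0, ∞), f(t) ≤ x₁ for all t ≥ 0, and f(t) → x₁ as t → ∞. -/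
/-!
For `x ≤ C` the drift is `a (x - x₁)(x - x₂)` with `x₁ < x₂ = (μ + √(μ² - 4aλ))/(2a)`: it is
positive below `x₁`, vanishes at `x₁` and is negative just above it. Every level slightly above
`x₁` is therefore a barrier that the trajectory cannot cross upwards, so it stays below `x₁` and,
having nonnegative speed there, is nondecreasing. Its limit is `x₁`, since while it stays below
`x₁ - ε` its speed is bounded below by the positive minimum of the drift on `[f 0, x₁ - ε]`.
-/

open Set Filter Topology

section AutonomousODE

variable {f g : ℝ → ℝ} {c : ℝ}

theorem le_of_hasDerivAt_comp_of_eventually_neg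
    (hf : ∀ t, 0 ≤ t → HasDerivAt f (g (f t)) t) (h0 : f 0 ≤ c)
    (hg : ∀ᶠ y in 𝓝[>] c, g y < 0) {t : ℝ} (ht : 0 ≤ t) : f t ≤ c := by
  have hid : Tendsto id (𝓝[>] c) (𝓝 c) := tendsto_nhdsWithin_of_tendsto_nhds tendsto_id
  refine ge_of_tendsto hid ?_
  filter_upwards [hg, self_mem_nhdsWithin] with y hgy hcy
  exact image_le_of_deriv_right_lt_deriv_boundary (B := fun _ => y) (B' := 0)
    (fun s hs => (hf s hs.1).continuousAt.continuousWithinAt)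
    (fun s hs => (hf s hs.1).hasDerivWithinAt) (h0.trans (le_of_lt hcy))
    (fun _ => hasDerivAt_const _ _) (fun s _ hfs => by simpa [hfs] using hgy) ⟨ht, le_rfl⟩

theorem monotoneOn_Ici_of_hasDerivAt_nonneg {f' : ℝ → ℝ} {a : ℝ}
    (hf : ∀ t, a ≤ t → HasDerivAt f (f' t) t) (hf' : ∀ t, a ≤ t → 0 ≤ f' t) :
    MonotoneOn f (Ici a) :=
  monotoneOn_of_hasDerivWithinAt_nonneg (convex_Ici a)
    (fun t ht => (hf t ht).continuousAt.continuousWithinAt)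
    (fun t ht => (hf t (interior_subset ht)).hasDerivWithinAt)
    (fun t ht => hf' t (interior_subset ht))

theorem exists_lt_of_hasDerivAt_comp_of_pos
    (hf : ∀ t, 0 ≤ t → HasDerivAt f (g (f t)) t) (hmono : MonotoneOn f (Ici 0))
    (hg : ContinuousOn g (Icc (f 0) c)) (hpos : ∀ y ∈ Ico (f 0) c, 0 < g y)
    {b : ℝ} (hb : b < c) : ∃ T, 0 ≤ T ∧ b < f T := by
  by_contra! hstay
  have hb0 : f 0 ≤ b := hstay 0 le_rfl
  obtain ⟨y₀, hy₀, hmin⟩ := isCompact_Icc.exists_isMinOn (nonempty_Icc.2 hb0)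
    (hg.mono (Icc_subset_Icc_right hb.le))
  set δ := g y₀
  have hδ : 0 < δ := hpos y₀ ⟨hy₀.1, hy₀.2.trans_lt hb⟩
  have hgrowth : ∀ t, 0 ≤ t → f 0 + δ * t ≤ f t := fun t ht =>
    image_le_of_deriv_right_le_deriv_boundary (f := fun s => f 0 + δ * s) (f' := fun _ => δ)
      (B' := fun s => g (f s)) (by fun_prop)
      (fun s _ => by simpa using (((hasDerivAt_id s).const_mul δ).const_add (f 0)).hasDerivWithinAt)
      (by simp) (fun s hs => (hf s hs.1).continuousAt.continuousWithinAt)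
      (fun s hs => (hf s hs.1).hasDerivWithinAt)
      (fun s hs => isMinOn_iff.1 hmin _ ⟨hmono self_mem_Ici hs.1 hs.1, hstay s hs.1⟩)
      ⟨ht, le_rfl⟩
  set T := (b - f 0) / δ + 1
  have hT : 0 ≤ T := add_nonneg (div_nonneg (sub_nonneg.2 hb0) hδ.le) zero_le_one
  have hδT : δ * T = b - f 0 + δ := by simp only [T]; field_simp
  linarith [hgrowth T hT, hstay T hT]

theorem tendsto_of_hasDerivAt_comp_of_pos
    (hf : ∀ t, 0 ≤ t → HasDerivAt f (g (f t)) t) (hmono : MonotoneOn f (Ici 0))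
    (hle : ∀ t, 0 ≤ t → f t ≤ c) (hg : ContinuousOn g (Icc (f 0) c))
    (hpos : ∀ y ∈ Ico (f 0) c, 0 < g y) : Tendsto f atTop (𝓝 c) := by
  refine tendsto_order.2 ⟨fun b hb => ?_, fun b hb => ?_⟩
  · obtain ⟨T, hT, hbT⟩ := exists_lt_of_hasDerivAt_comp_of_pos hf hmono hg hpos hb
    filter_upwards [eventually_ge_atTop T] with t ht
    exact hbT.trans_le (hmono hT (hT.trans ht) ht)
  · filter_upwards [eventually_ge_atTop 0] with t ht
    exact (hle t ht).trans_lt hb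

end AutonomousODE

section LinearSlowdown

variable {a lam mu C x₁ x₂ : ℝ}

theorem quadratic_drift_eq_mul_sub_mul_sub (ha : a ≠ 0) (hD : 0 ≤ mu ^ 2 - 4 * a * lam)
    (y : ℝ) :
    lam - (mu - a * y) * y = a * (y - (mu - √(mu ^ 2 - 4 * a * lam)) / (2 * a)) *
      (y - (mu + √(mu ^ 2 - 4 * a * lam)) / (2 * a)) := by
  have hs := Real.sq_sqrt hD
  set s := √(mu ^ 2 - 4 * a * lam)
  field_simp
  linear_combination hs

theorem drift_nonneg_of_le (ha : 0 < a) (hx₁₂ : x₁ < x₂) (hx₁C : x₁ < C)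
    (hfac : ∀ y, lam - (mu - a * y) * y = a * (y - x₁) * (y - x₂)) {y : ℝ} (hy : y ≤ x₁) :
    0 ≤ lam - (mu - a * y) * min y C := by
  rw [min_eq_left (hy.trans hx₁C.le), hfac]
  nlinarith [mul_nonneg (sub_nonneg.2 hy) (sub_nonneg.2 (hy.trans hx₁₂.le))]

theorem drift_pos_of_lt (ha : 0 < a) (hx₁₂ : x₁ < x₂) (hx₁C : x₁ < C)
    (hfac : ∀ y, lam - (mu - a * y) * y = a * (y - x₁) * (y - x₂)) {y : ℝ} (hy : y < x₁) :
    0 < lam - (mu - a * y) * min y C := by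
  rw [min_eq_left (hy.le.trans hx₁C.le), hfac]
  nlinarith [mul_pos (sub_pos.2 hy) (sub_pos.2 (hy.trans hx₁₂))]

theorem eventually_drift_neg (ha : 0 < a) (hx₁₂ : x₁ < x₂) (hx₁C : x₁ < C)
    (hfac : ∀ y, lam - (mu - a * y) * y = a * (y - x₁) * (y - x₂)) :
    ∀ᶠ y in 𝓝[>] x₁, lam - (mu - a * y) * min y C < 0 := by
  filter_upwards [Ioo_mem_nhdsGT (lt_min hx₁₂ hx₁C)] with y ⟨hy₁, hy₂⟩
  rw [lt_min_iff] at hy₂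
  rw [min_eq_left hy₂.2.le, hfac]
  nlinarith [mul_pos (sub_pos.2 hy₁) (sub_pos.2 hy₂.1)]

end LinearSlowdown

theorem trajectory_converges_from_below_general (a lam mu C x₁ : ℝ)
    (ha : 0 < a)
    (hD : 0 < mu ^ 2 - 4 * a * lam)
    (hx₁ : x₁ = (mu - Real.sqrt (mu ^ 2 - 4 * a * lam)) / (2 * a))
    (hx₁C : x₁ < C)
    (f : ℝ → ℝ)
    (hf : ∀ t : ℝ, 0 ≤ t → HasDerivAt f (lam - (mu - a * f t) * min (f t) C) t)
    (h0' : f 0 ≤ x₁) :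
    MonotoneOn f (Set.Ici (0 : ℝ)) ∧
    (∀ t : ℝ, 0 ≤ t → f t ≤ x₁) ∧
    Filter.Tendsto f Filter.atTop (nhds x₁) := by
  set g : ℝ → ℝ := fun y => lam - (mu - a * y) * min y C
  set x₂ := (mu + √(mu ^ 2 - 4 * a * lam)) / (2 * a)
  have hx₁₂ : x₁ < x₂ := by
    rw [hx₁]
    exact div_lt_div_of_pos_right (by linarith [Real.sqrt_pos.2 hD]) (by positivity)
  have hfac : ∀ y, lam - (mu - a * y) * y = a * (y - x₁) * (y - x₂) := by
    rw [hx₁]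
    exact quadratic_drift_eq_mul_sub_mul_sub ha.ne' hD.le
  have hle : ∀ t, 0 ≤ t → f t ≤ x₁ := fun t ht =>
    le_of_hasDerivAt_comp_of_eventually_neg (g := g) hf h0'
      (eventually_drift_neg ha hx₁₂ hx₁C hfac) ht
  have hmono : MonotoneOn f (Ici 0) := monotoneOn_Ici_of_hasDerivAt_nonneg hf
    fun t ht => drift_nonneg_of_le ha hx₁₂ hx₁C hfac (hle t ht)
  refine ⟨hmono, hle, tendsto_of_hasDerivAt_comp_of_pos (g := g) hf hmono hle
    (by fun_prop) fun y hy => drift_pos_of_lt ha hx₁₂ hx₁C hfac hy.2⟩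

/-- A fluid trajectory of `ẋ = lam - (mu - a*x)*min(x, C)` started in
`[0, x₁]`, where `x₁ = (mu - √(mu^2 - 4*a*lam))/(2*a) < C` is the smaller
root of the drift, is monotone nondecreasing, stays below `x₁`, and
converges to `x₁` as `t → ∞`. -/
theorem trajectory_converges_from_below (a lam mu C x₁ : ℝ)
    (ha : 0 < a) (hlam : 0 < lam) (hmu : 0 < mu) (hC : 0 < C)
    (hD : 0 < mu ^ 2 - 4 * a * lam)
    (hx₁ : x₁ = (mu - Real.sqrt (mu ^ 2 - 4 * a * lam)) / (2 * a))
    (hx₁C : x₁ < C)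
    (f : ℝ → ℝ)
    (hf : ∀ t : ℝ, 0 ≤ t → HasDerivAt f (lam - (mu - a * f t) * min (f t) C) t)
    (h0 : 0 ≤ f 0) (h0' : f 0 ≤ x₁) :
    MonotoneOn f (Set.Ici (0 : ℝ)) ∧
    (∀ t : ℝ, 0 ≤ t → f t ≤ x₁) ∧
    Filter.Tendsto f Filter.atTop (nhds x₁) :=
  trajectory_converges_from_below_general a lam mu C x₁ ha hD hx₁ hx₁C f hf h0'
end
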